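/- arXiv:1412.0186 — 2 statements merged into one kernel-verified Lean document; each statement's English description precedes it below -/
import Mathlib

section
/- Let p be a prime and let 1 → A → B →(λ) C → 1 be a split short exact sequence with section σ : C → B such that B is a p-almost direct product of A and C. Then for every n ≥ 1 the restrictions of λ and σ give a split short exact sequence 1 → γ_n^p A → γ_n^p B →(λ_n) γ_n^p C → 1; in particular λ(γ_n^p B) = γ_n^p C, σ(γ_n^p C) ⊆ γ_n^p B, and A ∩ γ_n^p B = γ_n^p A. -/
/-!
Write `A = ker f` and `Nₖ = γₖᵖ A`. The heart of the matter is that `C`, acting through `s`,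
acts trivially on every quotient `Nₖ / Nₖ₊₁`: for `k = 1` this is the `p`-almost direct product
hypothesis, and the three subgroups lemma together with `⁅x, yᵖ⁆ ≡ ⁅x, y⁆ᵖ` (valid when `y`
commutes with `⁅x, y⁆`) carries it up the filtration, and even gives
`⁅s(γⱼᵖ C), Nₖ⁆ ≤ Nⱼ₊ₖ`. Hence `Fₙ = s(γₙᵖ C) · Nₙ` satisfies `⁅B, Fₙ⁆ ≤ Fₙ₊₁` and
`xᵖ ∈ Fₙ₊₁` for `x ∈ Fₙ`, so `γₙᵖ B ≤ Fₙ` by minimality of `γᵖ`, and `A ∩ Fₙ = Nₙ` because `s`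
is a section. The other two claims are functoriality of `γᵖ`.
-/

open scoped commutatorElement

/-- The lower `F_p`-linear central filtration `(γₙᵖ G)ₙ` of a group `G`:
`gammaP p 1 = ⊤` (i.e. `γ₁ᵖ G = G`) and `γ_{n+1}ᵖ G` is the subgroup generated by
`[G, γₙᵖ G] ∪ {xᵖ : x ∈ γₙᵖ G}`.  (The value at `0` is junk, set to `⊤`.) -/
def gammaP (p : ℕ) {G : Type*} [Group G] : ℕ → Subgroup G
  | 0 => ⊤
  | 1 => ⊤
  | n + 2 =>
    Subgroup.closure
      ({x : G | ∃ g y : G, y ∈ gammaP p (n + 1) ∧ x = ⁅g, y⁆} ∪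
       {x : G | ∃ y : G, y ∈ gammaP p (n + 1) ∧ x = y ^ p})

open Subgroup

section Commutators

variable {G : Type*} [Group G]

theorem Subgroup.commutator_closure_le_of_normal {H N : Subgroup G} [hN : N.Normal] {S : Set G}
    (h : ∀ g ∈ H, ∀ x ∈ S, ⁅g, x⁆ ∈ N) : ⁅H, closure S⁆ ≤ N := by
  rw [commutator_le]
  intro g hg x hx
  induction hx using closure_induction with
  | mem x hx => exact h g hg x hx
  | one => simp
  | mul x y _ _ hx hy =>
    rw [commutatorElement_mul_right_eq_mul_conj, mul_assoc _ x, mul_assoc]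
    exact mul_mem hx (hN.conj_mem _ hy x)
  | inv x _ hx =>
    rw [commutatorElement_inv_right, ← commutatorElement_inv]
    simpa using hN.conj_mem _ (inv_mem hx) x⁻¹

theorem Subgroup.commutator_sup_le_of_normal {H K L N : Subgroup G} [N.Normal]
    (hK : ⁅H, K⁆ ≤ N) (hL : ⁅H, L⁆ ≤ N) : ⁅H, K ⊔ L⁆ ≤ N := by
  rw [sup_eq_closure]
  refine commutator_closure_le_of_normal fun g hg x hx => ?_
  rcases hx with hx | hx
  exacts [commutator_le.1 hK g hg x hx, commutator_le.1 hL g hg x hx]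

theorem Subgroup.commutator_commutator_le_of_rotate {H₁ H₂ H₃ N : Subgroup G} [N.Normal]
    (h1 : ⁅⁅H₂, H₃⁆, H₁⁆ ≤ N) (h2 : ⁅⁅H₃, H₁⁆, H₂⁆ ≤ N) : ⁅⁅H₁, H₂⁆, H₃⁆ ≤ N := by
  simp only [← QuotientGroup.ker_mk' N, ← map_eq_bot_iff, map_commutator] at *
  exact commutator_commutator_eq_bot_of_rotate h1 h2

theorem commutatorElement_pow_right_of_commute {x y : G} (h : Commute y ⁅x, y⁆) (n : ℕ) :
    ⁅x, y ^ n⁆ = ⁅x, y⁆ ^ n := by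
  have hconj : x * y * x⁻¹ = ⁅x, y⁆ * y := by simp [commutatorElement_def]
  rw [commutatorElement_def, ← conj_pow, hconj, h.symm.mul_pow, mul_inv_cancel_right]

theorem commutatorElement_pow_right_mem {N : Subgroup G} [N.Normal] {x y : G} (n : ℕ)
    (hy : ⁅y, ⁅x, y⁆⁆ ∈ N) (hpow : ⁅x, y⁆ ^ n ∈ N) : ⁅x, y ^ n⁆ ∈ N := by
  rw [← QuotientGroup.ker_mk' N] at hy hpow ⊢
  simp only [MonoidHom.mem_ker, map_commutatorElement, map_pow] at hy hpow ⊢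
  rw [commutatorElement_pow_right_of_commute (commutatorElement_eq_one_iff_commute.1 hy), hpow]

theorem inv_pow_mul_mul_pow_mem {N : Subgroup G} [N.Normal] {x m : G} (n : ℕ)
    (hcomm : ⁅x, m⁆ ∈ N) (hm : m ^ n ∈ N) : (x ^ n)⁻¹ * (x * m) ^ n ∈ N := by
  rw [← QuotientGroup.ker_mk' N] at hcomm hm ⊢
  simp only [MonoidHom.mem_ker, map_commutatorElement, map_pow, map_mul, map_inv,
    commutatorElement_eq_one_iff_commute] at hcomm hm ⊢
  rw [hcomm.mul_pow, hm, mul_one, inv_mul_cancel]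

theorem Subgroup.commutator_closure_pow_le {H K M N : Subgroup G} [N.Normal] (n : ℕ)
    (hHK : ⁅H, K⁆ ≤ M) (hKM : ⁅K, M⁆ ≤ N) (hM : ∀ x ∈ M, x ^ n ∈ N) :
    ⁅H, closure ((· ^ n) '' (K : Set G))⁆ ≤ N := by
  refine commutator_closure_le_of_normal ?_
  rintro g hg _ ⟨y, hy, rfl⟩
  have hgy : ⁅g, y⁆ ∈ M := commutator_le.1 hHK g hg y hy
  exact commutatorElement_pow_right_mem n (commutator_le.1 hKM y hy _ hgy) (hM _ hgy)

end Commutators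

section GammaP

variable {G H : Type*} [Group G] [Group H] (p : ℕ)

theorem gammaP_one : gammaP p 1 = (⊤ : Subgroup G) := rfl

theorem gammaP_succ_succ (n : ℕ) :
    (gammaP p (n + 2) : Subgroup G) =
      ⁅(⊤ : Subgroup G), gammaP p (n + 1)⁆ ⊔
        closure ((· ^ p) '' ((gammaP p (n + 1) : Subgroup G) : Set G)) := by
  rw [gammaP, Subgroup.closure_union, Subgroup.commutator_def]
  congr 2 <;> ext x <;> simp [eq_comm]

theorem commutator_top_gammaP_le (n : ℕ) :
    ⁅(⊤ : Subgroup G), (gammaP p (n + 1) : Subgroup G)⁆ ≤ gammaP p (n + 2) := by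
  rw [gammaP_succ_succ]
  exact le_sup_left

theorem pow_mem_gammaP {n : ℕ} {x : G} (hx : x ∈ (gammaP p (n + 1) : Subgroup G)) :
    x ^ p ∈ (gammaP p (n + 2) : Subgroup G) := by
  rw [gammaP_succ_succ]
  exact mem_sup_right (subset_closure ⟨x, hx, rfl⟩)

theorem gammaP_le_of_commutator_le_of_pow_mem {F : ℕ → Subgroup G} (h1 : F 1 = ⊤)
    (hcomm : ∀ n, ⁅(⊤ : Subgroup G), F (n + 1)⁆ ≤ F (n + 2))
    (hpow : ∀ n, ∀ x ∈ F (n + 1), x ^ p ∈ F (n + 2)) :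
    ∀ n, gammaP p (n + 1) ≤ F (n + 1)
  | 0 => h1.ge
  | n + 1 => by
    have ih := gammaP_le_of_commutator_le_of_pow_mem h1 hcomm hpow n
    rw [gammaP_succ_succ]
    refine sup_le ((commutator_mono le_rfl ih).trans (hcomm n)) ?_
    rw [closure_le]
    rintro _ ⟨x, hx, rfl⟩
    exact hpow n x (ih hx)

theorem map_gammaP_le (φ : G →* H) : ∀ n, (gammaP p n).map φ ≤ gammaP p n
  | 0 => le_top
  | n + 1 => by
    rw [map_le_iff_le_comap]
    refine gammaP_le_of_commutator_le_of_pow_mem p (F := fun n => (gammaP p n).comap φ)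
      (comap_top φ) (fun n => ?_) (fun n x hx => ?_) n
    · rw [commutator_le]
      intro g _ x hx
      rw [mem_comap, map_commutatorElement]
      exact commutator_le.1 (commutator_top_gammaP_le p n) _ trivial _ hx
    · rw [mem_comap, map_pow]
      exact pow_mem_gammaP p hx

theorem map_gammaP_succ_succ (φ : G →* H) (n : ℕ) :
    (gammaP p (n + 2)).map φ = ⁅φ.range, (gammaP p (n + 1)).map φ⁆ ⊔
      closure ((· ^ p) '' ((gammaP p (n + 1)).map φ : Set H)) := by
  rw [gammaP_succ_succ, Subgroup.map_sup, map_commutator, MonoidHom.map_closure,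
    ← MonoidHom.range_eq_map, coe_map, Set.image_image, Set.image_image]
  simp only [map_pow]

theorem map_gammaP_of_surjective {φ : G →* H} (hφ : Function.Surjective φ) :
    ∀ n, (gammaP p n).map φ = gammaP p n
  | 0 | 1 => map_top_of_surjective φ hφ
  | n + 2 => by
    rw [map_gammaP_succ_succ, map_gammaP_of_surjective hφ (n + 1), MonoidHom.range_eq_top.2 hφ,
      gammaP_succ_succ]

instance gammaP_characteristic (n : ℕ) : (gammaP p n : Subgroup G).Characteristic :=
  characteristic_iff_map_le.2 fun φ => map_gammaP_le p φ.toMonoidHom n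

theorem commutator_gammaP_le :
    ∀ i j, ⁅(gammaP p (i + 1) : Subgroup G), (gammaP p (j + 1) : Subgroup G)⁆ ≤
      gammaP p (i + j + 2)
  | i, 0 => by
    rw [commutator_comm]
    exact commutator_top_gammaP_le p i
  | i, j + 1 => by
    have ih := commutator_gammaP_le i j
    rw [gammaP_succ_succ]
    refine commutator_sup_le_of_normal ?_ ?_
    · rw [commutator_comm]
      refine commutator_commutator_le_of_rotate ?_ ?_
      · rw [commutator_comm, commutator_comm (gammaP p (j + 1))]
        exact (commutator_mono le_rfl ih).trans (commutator_top_gammaP_le p _)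
      · rw [show i + (j + 1) + 2 = i + 1 + j + 2 by omega, commutator_comm _ ⊤]
        exact (commutator_mono (commutator_top_gammaP_le p i) le_rfl).trans
          (commutator_gammaP_le (i + 1) j)
    · exact commutator_closure_pow_le p ih
        ((commutator_mono le_top le_rfl).trans (commutator_top_gammaP_le p _))
        (fun x hx => pow_mem_gammaP p hx)

end GammaP

def gammaPIn (p : ℕ) {G : Type*} [Group G] (A : Subgroup G) (n : ℕ) : Subgroup G :=
  (gammaP p n : Subgroup A).map A.subtype

section GammaPIn

variable {G : Type*} [Group G] (p : ℕ) (A : Subgroup G)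

theorem gammaPIn_one : gammaPIn p A 1 = A := by
  rw [gammaPIn, gammaP_one, ← MonoidHom.range_eq_map, range_subtype]

theorem gammaPIn_le (n : ℕ) : gammaPIn p A n ≤ A :=
  (map_le_range _ _).trans A.range_subtype.le

theorem gammaPIn_le_gammaP (n : ℕ) : gammaPIn p A n ≤ gammaP p n :=
  map_gammaP_le p A.subtype n

instance gammaPIn_normal [A.Normal] (n : ℕ) : (gammaPIn p A n).Normal :=
  ConjAct.normal_of_characteristic_of_normal

theorem gammaPIn_succ_succ (n : ℕ) :
    gammaPIn p A (n + 2) = ⁅A, gammaPIn p A (n + 1)⁆ ⊔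
      closure ((· ^ p) '' (gammaPIn p A (n + 1) : Set G)) := by
  rw [gammaPIn, map_gammaP_succ_succ, range_subtype, gammaPIn]

variable {p A}

theorem commutator_gammaPIn_le (n : ℕ) : ⁅A, gammaPIn p A (n + 1)⁆ ≤ gammaPIn p A (n + 2) := by
  rw [gammaPIn_succ_succ]
  exact le_sup_left

theorem pow_mem_gammaPIn {n : ℕ} {x : G} (hx : x ∈ gammaPIn p A (n + 1)) :
    x ^ p ∈ gammaPIn p A (n + 2) := by
  rw [gammaPIn_succ_succ]
  exact mem_sup_right (subset_closure ⟨x, hx, rfl⟩)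

theorem commutator_gammaPIn_gammaPIn_le (i j : ℕ) :
    ⁅gammaPIn p A (i + 1), gammaPIn p A (j + 1)⁆ ≤ gammaPIn p A (i + j + 2) := by
  rw [gammaPIn, gammaPIn, ← map_commutator]
  exact map_mono (commutator_gammaP_le p i j)

end GammaPIn

section ActionOnGammaPIn

variable {B C : Type*} [Group B] [Group C] {p : ℕ} {A : Subgroup B} [A.Normal] {s : C →* B}

theorem commutator_range_gammaPIn_le (hsA : ⁅s.range, A⁆ ≤ gammaPIn p A 2) :
    ∀ k, ⁅s.range, gammaPIn p A (k + 1)⁆ ≤ gammaPIn p A (k + 2)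
  | 0 => by rwa [gammaPIn_one]
  | k + 1 => by
    have ih := commutator_range_gammaPIn_le hsA k
    rw [gammaPIn_succ_succ]
    refine commutator_sup_le_of_normal ?_ ?_
    · rw [commutator_comm]
      refine commutator_commutator_le_of_rotate ?_ ?_
      · rw [commutator_comm _ s.range, commutator_comm _ A]
        exact (commutator_mono le_rfl ih).trans (commutator_gammaPIn_le _)
      · rw [show k + 1 + 2 = 1 + k + 2 by omega]
        exact (commutator_mono hsA le_rfl).trans (commutator_gammaPIn_gammaPIn_le 1 k)
    · exact commutator_closure_pow_le p ih
        ((commutator_mono (gammaPIn_le p A _) le_rfl).trans (commutator_gammaPIn_le _))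
        (fun x hx => pow_mem_gammaPIn hx)

theorem commutator_map_gammaP_gammaPIn_le (hsA : ⁅s.range, A⁆ ≤ gammaPIn p A 2) :
    ∀ j k, ⁅(gammaP p (j + 1)).map s, gammaPIn p A (k + 1)⁆ ≤ gammaPIn p A (j + k + 2)
  | 0, k => by
    rw [gammaP_one, ← MonoidHom.range_eq_map, zero_add]
    exact commutator_range_gammaPIn_le hsA k
  | j + 1, k => by
    have ih := commutator_map_gammaP_gammaPIn_le hsA j
    have hS : (gammaP p (j + 1)).map s ≤ s.range := map_le_range s _
    rw [map_gammaP_succ_succ, commutator_comm]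
    refine commutator_sup_le_of_normal ?_ ?_
    · rw [commutator_comm]
      refine commutator_commutator_le_of_rotate ?_ ?_
      · rw [commutator_comm _ s.range, show j + 1 + k + 2 = j + k + 1 + 2 by omega]
        exact (commutator_mono le_rfl (ih k)).trans
          (commutator_range_gammaPIn_le hsA _)
      · rw [commutator_comm _ ((gammaP p (j + 1)).map s),
          show j + 1 + k + 2 = j + (k + 1) + 2 by omega, commutator_comm (gammaPIn p A _)]
        exact (commutator_mono le_rfl (commutator_range_gammaPIn_le hsA k)).trans (ih (k + 1))
    · rw [show j + 1 + k + 2 = j + k + 1 + 2 by omega]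
      exact commutator_closure_pow_le p ((commutator_comm _ _).trans_le (ih k))
        ((commutator_mono hS le_rfl).trans (commutator_range_gammaPIn_le hsA _))
        (fun x hx => pow_mem_gammaPIn hx)

end ActionOnGammaPIn

section SplitExtension

variable {B C : Type*} [Group B] [Group C] {p : ℕ} {f : B →* C} {s : C →* B}

theorem range_sup_ker_eq_top (hs : ∀ c, f (s c) = c) : s.range ⊔ f.ker = ⊤ := by
  refine eq_top_iff.2 fun g _ => mem_sup_of_normal_right.2 ⟨s (f g), ⟨f g, rfl⟩,
    (s (f g))⁻¹ * g, ?_, mul_inv_cancel_left _ _⟩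
  rw [MonoidHom.mem_ker, map_mul, map_inv, hs, inv_mul_cancel]

theorem ker_inf_map_sup_le (hs : ∀ c, f (s c) = c) {N : Subgroup B} [N.Normal] (hN : N ≤ f.ker)
    (K : Subgroup C) : f.ker ⊓ (K.map s ⊔ N) ≤ N := by
  rintro _ ⟨hker, hx⟩
  obtain ⟨_, ⟨c, -, rfl⟩, m, hm, rfl⟩ := mem_sup_of_normal_right.1 hx
  have hc : c = 1 := by
    simpa [MonoidHom.mem_ker.1 (hN hm), hs] using hker
  simpa [hc] using hm

theorem commutator_top_gammaPIn_ker_le (hs : ∀ c, f (s c) = c)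
    (hsA : ⁅s.range, f.ker⁆ ≤ gammaPIn p f.ker 2) (k : ℕ) :
    ⁅(⊤ : Subgroup B), gammaPIn p f.ker (k + 1)⁆ ≤ gammaPIn p f.ker (k + 2) := by
  rw [← range_sup_ker_eq_top hs, commutator_comm]
  refine commutator_sup_le_of_normal ?_ ?_
  · rw [commutator_comm]
    exact commutator_range_gammaPIn_le hsA k
  · rw [commutator_comm]
    exact commutator_gammaPIn_le k

theorem gammaP_le_map_sup_gammaPIn (hs : ∀ c, f (s c) = c)
    (hsA : ⁅s.range, f.ker⁆ ≤ gammaPIn p f.ker 2) :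
    ∀ n, (gammaP p (n + 1) : Subgroup B) ≤
      (gammaP p (n + 1) : Subgroup C).map s ⊔ gammaPIn p f.ker (n + 1) := by
  refine gammaP_le_of_commutator_le_of_pow_mem p
    (F := fun n => (gammaP p n : Subgroup C).map s ⊔ gammaPIn p f.ker n) ?_ (fun n => ?_)
    (fun n x hx => ?_)
  · rw [gammaP_one (G := C), ← MonoidHom.range_eq_map, gammaPIn_one, range_sup_ker_eq_top hs]
  · rw [commutator_le]
    intro g _ x hx
    obtain ⟨_, ⟨c, hc, rfl⟩, m, hm, rfl⟩ := mem_sup_of_normal_right.1 hx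
    have hgm : ⁅g, m⁆ ∈ gammaPIn p f.ker (n + 2) :=
      commutator_le.1 (commutator_top_gammaPIn_ker_le hs hsA n) _ trivial _ hm
    have hgc : ⁅g, s c⁆ ∈ (gammaP p (n + 2) : Subgroup C).map s ⊔ gammaPIn p f.ker (n + 2) := by
      obtain ⟨_, ⟨d, rfl⟩, a, ha, rfl⟩ :=
        mem_sup_of_normal_right.1 ((range_sup_ker_eq_top hs).ge (mem_top g))
      have hdc : ⁅s d, s c⁆ ∈ (gammaP p (n + 2) : Subgroup C).map s :=
        ⟨⁅d, c⁆, commutator_le.1 (commutator_top_gammaP_le p n) _ trivial _ hc,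
          map_commutatorElement s d c⟩
      have hac : ⁅a, s c⁆ ∈ gammaPIn p f.ker (n + 2) := by
        have h := commutator_map_gammaP_gammaPIn_le hsA n 0
        rw [commutator_comm, gammaPIn_one] at h
        exact commutator_le.1 h a ha _ ⟨c, hc, rfl⟩
      rw [commutatorElement_mul_left_eq_conj_mul]
      exact mul_mem (mem_sup_right (Normal.conj_mem inferInstance _ hac _))
        (mem_sup_left hdc)
    rw [commutatorElement_mul_right_eq_mul_conj]
    simpa only [mul_assoc] using
      mul_mem hgc (mem_sup_right (Normal.conj_mem inferInstance _ hgm (s c)))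
  · obtain ⟨_, ⟨c, hc, rfl⟩, m, hm, rfl⟩ := mem_sup_of_normal_right.1 hx
    have hcm : ⁅s c, m⁆ ∈ gammaPIn p f.ker (n + 2) :=
      commutator_le.1 (commutator_range_gammaPIn_le hsA n) _ ⟨c, rfl⟩ _ hm
    rw [← mul_inv_cancel_left (s c ^ p) ((s c * m) ^ p)]
    exact mul_mem (mem_sup_left ⟨c ^ p, pow_mem_gammaP p hc, map_pow s c p⟩)
      (mem_sup_right (inv_pow_mul_mul_pow_mem p hcm (pow_mem_gammaPIn hm)))

end SplitExtension

theorem statement2_general (p : ℕ)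
    {B C : Type*} [Group B] [Group C]
    (f : B →* C)
    (s : C →* B) (hs : ∀ c, f (s c) = c)
    (hadp : ∀ a ∈ f.ker, ∀ c : C,
      s c * a * (s c)⁻¹ * a⁻¹ ∈ (gammaP p 2 : Subgroup ↥f.ker).map f.ker.subtype) :
    ∀ n : ℕ, 1 ≤ n →
      (gammaP p n : Subgroup B).map f = (gammaP p n : Subgroup C) ∧
      (gammaP p n : Subgroup C).map s ≤ (gammaP p n : Subgroup B) ∧
      f.ker ⊓ (gammaP p n : Subgroup B) =
        (gammaP p n : Subgroup ↥f.ker).map f.ker.subtype := by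
  have hsA : ⁅s.range, f.ker⁆ ≤ gammaPIn p f.ker 2 := by
    rw [commutator_le]
    rintro _ ⟨c, rfl⟩ a ha
    exact hadp a ha c
  rintro (_ | n) hn
  · omega
  refine ⟨map_gammaP_of_surjective p (fun c => ⟨s c, hs c⟩) _, map_gammaP_le p s _,
    le_antisymm ?_ (le_inf (gammaPIn_le p _ _) (gammaPIn_le_gammaP p _ _))⟩
  exact (inf_le_inf_left _ (gammaP_le_map_sup_gammaPIn hs hsA n)).trans
    (ker_inf_map_sup_le hs (gammaPIn_le p _ _) _)

/-- If `B` is a `p`-almost direct product of `A = ker f` and `C` (with section `s`), then for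
every `n ≥ 1` the restrictions of `f` and `s` yield a split short exact sequence
`1 → γₙᵖ A → γₙᵖ B → γₙᵖ C → 1`; i.e. `f(γₙᵖ B) = γₙᵖ C`, `s(γₙᵖ C) ⊆ γₙᵖ B` and
`A ∩ γₙᵖ B = γₙᵖ A`. -/
theorem statement2 (p : ℕ) (hp : p.Prime)
    {B C : Type*} [Group B] [Group C]
    (f : B →* C) (hf : Function.Surjective f)
    (s : C →* B) (hs : ∀ c, f (s c) = c)
    (hadp : ∀ a ∈ f.ker, ∀ c : C,
      s c * a * (s c)⁻¹ * a⁻¹ ∈ (gammaP p 2 : Subgroup ↥f.ker).map f.ker.subtype) :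
    ∀ n : ℕ, 1 ≤ n →
      (gammaP p n : Subgroup B).map f = (gammaP p n : Subgroup C) ∧
      (gammaP p n : Subgroup C).map s ≤ (gammaP p n : Subgroup B) ∧
      f.ker ⊓ (gammaP p n : Subgroup B) =
        (gammaP p n : Subgroup ↥f.ker).map f.ker.subtype :=
  statement2_general p f s hs hadp
end

section
/- Let A and C be groups and φ : C → Aut(A) an action such that φ(c)(a)·a⁻¹ ∈ γ_2² A for every c ∈ C and a ∈ A (so that B = A ⋊_φ C is a 2-almost direct product). Then for every a ∈ A and c ∈ C, viewing a and c as elements of B, the element c·a − a·c of F₂[B] lies in ι_A(Ī(A)²)·c; that is, there exists x ∈ Ī(A)² with c·a − a·c = ι_A(x)·c in F₂[B]. -/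
open scoped commutatorElement

/-- `γ₂² G`: the subgroup of `G` generated by all commutators and all squares. -/
def gammaTwoTwo (G : Type*) [Group G] : Subgroup G :=
  Subgroup.closure ({x : G | ∃ a b : G, x = ⁅a, b⁆} ∪ {x : G | ∃ a : G, x = a ^ 2})

/-- The augmentation ideal `Ī(G) ⊆ k[G]`, as a `k`-submodule of the group algebra:
the kernel of the augmentation map sending each group element to `1`. -/
noncomputable def augIdeal (k : Type*) (G : Type*) [CommSemiring k] [Group G] :
    Submodule k (MonoidAlgebra k G) :=
  LinearMap.ker ((MonoidAlgebra.lift k k G) 1).toLinearMap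

/-- The ring (algebra) homomorphism `k[G] → k[H]` induced by a group homomorphism `G → H`. -/
noncomputable def iotaHom (k : Type*) [CommSemiring k] {G H : Type*} [Group G] [Group H]
    (f : G →* H) : MonoidAlgebra k G →ₐ[k] MonoidAlgebra k H :=
  (MonoidAlgebra.lift k (MonoidAlgebra k H) G) ((MonoidAlgebra.of k H).comp f)

/-!
The map `g ↦ g - 1` sends `γ₂² A` into `Ī(A)²`. Indeed, the set of `g` with
`g - 1 ∈ Ī²` is a subgroup, since `xy - 1 = (x - 1)(y - 1) + (x - 1) + (y - 1)`; it contains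
every commutator, since `[p, q] - 1 = ((p - 1)(q - 1) - (q - 1)(p - 1)) (qp)⁻¹`, and in
characteristic `2` every square, since `p² - 1 = (p - 1)²`. In `B`, `c a = φ(c)(a) c`, so
`c a - a c = (φ(c)(a) a⁻¹ - 1) a c`, and `(φ(c)(a) a⁻¹ - 1) a ∈ Ī(A)²`.
-/

open MonoidAlgebra

section AugmentationIdeal

variable {k G : Type*} [CommRing k] [Group G]

lemma of_sub_one_mem_augIdeal (g : G) : of k G g - 1 ∈ augIdeal k G := by
  simp [augIdeal]

lemma mul_mem_augIdeal_left (b : MonoidAlgebra k G) {x : MonoidAlgebra k G}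
    (hx : x ∈ augIdeal k G) : b * x ∈ augIdeal k G := by
  simp_all [augIdeal]

lemma mul_mem_augIdeal_right (b : MonoidAlgebra k G) {x : MonoidAlgebra k G}
    (hx : x ∈ augIdeal k G) : x * b ∈ augIdeal k G := by
  simp_all [augIdeal]

lemma mul_mem_augIdeal_sq {x y : MonoidAlgebra k G} (hx : x ∈ augIdeal k G)
    (hy : y ∈ augIdeal k G) : x * y ∈ augIdeal k G ^ 2 := by
  rw [sq]
  exact Submodule.mul_mem_mul hx hy

lemma mul_mem_augIdeal_sq_left (b : MonoidAlgebra k G) {x : MonoidAlgebra k G}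
    (hx : x ∈ augIdeal k G ^ 2) : b * x ∈ augIdeal k G ^ 2 := by
  rw [sq] at hx
  refine Submodule.mul_induction_on hx (fun m hm n hn => ?_) (fun u v hu hv => ?_)
  · rw [← mul_assoc]; exact mul_mem_augIdeal_sq (mul_mem_augIdeal_left b hm) hn
  · rw [mul_add]; exact add_mem hu hv

lemma mul_mem_augIdeal_sq_right (b : MonoidAlgebra k G) {x : MonoidAlgebra k G}
    (hx : x ∈ augIdeal k G ^ 2) : x * b ∈ augIdeal k G ^ 2 := by
  rw [sq] at hx
  refine Submodule.mul_induction_on hx (fun m hm n hn => ?_) (fun u v hu hv => ?_)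
  · rw [mul_assoc]; exact mul_mem_augIdeal_sq hm (mul_mem_augIdeal_right b hn)
  · rw [add_mul]; exact add_mem hu hv

end AugmentationIdeal

section DimensionSubgroup

noncomputable def dimensionSubgroupTwo (k G : Type*) [CommRing k] [Group G] : Subgroup G where
  carrier := {g | of k G g - 1 ∈ augIdeal k G ^ 2}
  one_mem' := by
    show of k G 1 - 1 ∈ augIdeal k G ^ 2
    rw [map_one, sub_self]
    exact zero_mem _
  mul_mem' {x y} hx hy := by
    have h : of k G (x * y) - 1 =
        (of k G x - 1) * (of k G y - 1) + (of k G x - 1) + (of k G y - 1) := by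
      rw [map_mul]; noncomm_ring
    show of k G (x * y) - 1 ∈ augIdeal k G ^ 2
    rw [h]
    exact add_mem (add_mem (mul_mem_augIdeal_sq (of_sub_one_mem_augIdeal x)
      (of_sub_one_mem_augIdeal y)) hx) hy
  inv_mem' {x} hx := by
    have h : of k G x⁻¹ - 1 = -(of k G x⁻¹ * (of k G x - 1)) := by
      rw [mul_sub, ← map_mul, inv_mul_cancel, map_one, mul_one, neg_sub]
    show of k G x⁻¹ - 1 ∈ augIdeal k G ^ 2
    rw [h]
    exact neg_mem (mul_mem_augIdeal_sq_left _ hx)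

variable {k G : Type*} [CommRing k] [Group G]

lemma mem_dimensionSubgroupTwo {g : G} :
    g ∈ dimensionSubgroupTwo k G ↔ of k G g - 1 ∈ augIdeal k G ^ 2 :=
  Iff.rfl

lemma commutatorElement_mem_dimensionSubgroupTwo (p q : G) :
    ⁅p, q⁆ ∈ dimensionSubgroupTwo k G := by
  have h : of k G ⁅p, q⁆ - 1 =
      ((of k G p - 1) * (of k G q - 1) - (of k G q - 1) * (of k G p - 1)) *
        of k G (q * p)⁻¹ := by
    have hpq : of k G ⁅p, q⁆ = of k G p * of k G q * of k G (q * p)⁻¹ := by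
      rw [← map_mul, ← map_mul, commutatorElement_def]; congr 1; group
    have hone : (1 : MonoidAlgebra k G) = of k G q * of k G p * of k G (q * p)⁻¹ := by
      rw [← map_mul, ← map_mul, mul_inv_cancel, map_one]
    rw [hpq]; nth_rewrite 1 [hone]; noncomm_ring
  rw [mem_dimensionSubgroupTwo, h]
  refine mul_mem_augIdeal_sq_right _ (sub_mem ?_ ?_) <;>
    exact mul_mem_augIdeal_sq (of_sub_one_mem_augIdeal _) (of_sub_one_mem_augIdeal _)

lemma sq_mem_dimensionSubgroupTwo [CharP k 2] (p : G) : p ^ 2 ∈ dimensionSubgroupTwo k G := by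
  have two_eq_zero : (2 : MonoidAlgebra k G) = 0 := by
    rw [← map_ofNat (algebraMap k (MonoidAlgebra k G)) 2, CharTwo.two_eq_zero, map_zero]
  have h : of k G (p ^ 2) - 1 = (of k G p - 1) * (of k G p - 1) + 2 * (of k G p - 1) := by
    rw [map_pow]; noncomm_ring
  rw [mem_dimensionSubgroupTwo, h, two_eq_zero, zero_mul, add_zero]
  exact mul_mem_augIdeal_sq (of_sub_one_mem_augIdeal p) (of_sub_one_mem_augIdeal p)

lemma gammaTwoTwo_le_dimensionSubgroupTwo [CharP k 2] :
    gammaTwoTwo G ≤ dimensionSubgroupTwo k G := by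
  refine Subgroup.closure_le _ |>.mpr (Set.union_subset ?_ ?_)
  · rintro _ ⟨p, q, rfl⟩
    exact commutatorElement_mem_dimensionSubgroupTwo p q
  · rintro _ ⟨p, rfl⟩
    exact sq_mem_dimensionSubgroupTwo p

end DimensionSubgroup

lemma iotaHom_of {k G H : Type*} [CommSemiring k] [Group G] [Group H] (f : G →* H) (g : G) :
    iotaHom k f (of k G g) = of k H (f g) := by
  simp [iotaHom]

/-- In a `2`-almost direct product `B = A ⋊[φ] C`, for `a ∈ A` and `c ∈ C` one has
`c·a - a·c = ι_A(x)·c` in `F₂[B]` for some `x ∈ Ī(A)²`. -/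
theorem statement8 {A C : Type*} [Group A] [Group C] (φ : C →* MulAut A)
    (hφ : ∀ (c : C) (a : A), φ c a * a⁻¹ ∈ gammaTwoTwo A)
    (a : A) (c : C) :
    ∃ x ∈ (augIdeal (ZMod 2) A) ^ 2,
      MonoidAlgebra.of (ZMod 2) (A ⋊[φ] C) (SemidirectProduct.inr c) *
          MonoidAlgebra.of (ZMod 2) (A ⋊[φ] C) (SemidirectProduct.inl a) -
        MonoidAlgebra.of (ZMod 2) (A ⋊[φ] C) (SemidirectProduct.inl a) *
          MonoidAlgebra.of (ZMod 2) (A ⋊[φ] C) (SemidirectProduct.inr c) =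
      iotaHom (ZMod 2) (SemidirectProduct.inl) x *
        MonoidAlgebra.of (ZMod 2) (A ⋊[φ] C) (SemidirectProduct.inr c) := by
  have hmem : φ c a * a⁻¹ ∈ dimensionSubgroupTwo (ZMod 2) A :=
    gammaTwoTwo_le_dimensionSubgroupTwo (hφ c a)
  refine ⟨(of (ZMod 2) A (φ c a * a⁻¹) - 1) * of (ZMod 2) A a,
    mul_mem_augIdeal_sq_right _ hmem, ?_⟩
  have hconj : (SemidirectProduct.inr c * SemidirectProduct.inl a : A ⋊[φ] C) =
      SemidirectProduct.inl (φ c a) * SemidirectProduct.inr c := by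
    rw [SemidirectProduct.inl_aut, map_inv, inv_mul_cancel_right]
  rw [map_mul, map_sub, map_one, iotaHom_of, iotaHom_of, sub_mul, one_mul, sub_mul,
    ← map_mul, ← map_mul, ← map_mul, ← map_mul, hconj, ← map_mul SemidirectProduct.inl,
    inv_mul_cancel_right]
end
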